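/- Let G be a group such that G/Z(G) is generated by the cosets x_1Z(G), x_2Z(G), ..., x_dZ(G), and suppose the set [x_i, G] = { [x_i, g] : g ∈ G } is finite for each i with 1 ≤ i ≤ d. Then G/Z(G) is finite with |G/Z(G)| ≤ ∏_{i=1}^{d} |[x_i, G]|, and the derived subgroup G' is finite. -/

import Mathlib

/-!
Because the cosets of the `x i` generate `G/Z(G)`, an element commuting with every `x i` is
central, so `Z(G) = ⋂ᵢ C(x i)` and `[G : Z(G)] ≤ ∏ᵢ [G : C(x i)]`. By orbit–stabilizer,
`[G : C(x)]` is the size of the conjugacy class of `x`, which `g⁻¹ x g ↦ x⁻¹ g⁻¹ x g` maps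
bijectively onto `[x, G]`. Finally, a commutator `⁅a, b⁆` only depends on the cosets of `a` and
`b` modulo `Z(G)`, so `G` has finitely many commutators and `G'` is finite by Schur's theorem.
-/

open scoped commutatorElement

namespace Subgroup

variable {G : Type*} [Group G]

theorem centralizer_eq_center_of_closure_image_eq_top {S : Set G}
    (hS : closure (((↑) : G → G ⧸ center G) '' S) = ⊤) : centralizer S = center G := by
  refine le_antisymm (fun g hg => ?_) (center_le_centralizer S)
  have hmap : (centralizer {g}).map (QuotientGroup.mk' (center G)) = ⊤ := by
    rw [eq_top_iff, ← hS, closure_le]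
    rintro _ ⟨s, hs, rfl⟩
    exact ⟨s, mem_centralizer_singleton_iff.mpr (hg s hs), rfl⟩
  have htop : centralizer {g} = ⊤ := by
    rw [← comap_map_eq_self (H := centralizer {g}) (f := QuotientGroup.mk' (center G)) (by
      simpa using center_le_centralizer {g}), hmap, comap_top]
  exact mem_center_iff.mpr fun h => mem_centralizer_singleton_iff.mp (htop ▸ mem_top h)

theorem index_centralizer_singleton (g : G) :
    (centralizer {g}).index = Nat.card {c : G | ∃ h : G, c = g⁻¹ * h⁻¹ * g * h} := by
  have hset : {c : G | ∃ h : G, c = g⁻¹ * h⁻¹ * g * h} =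
      (g⁻¹ * ·) '' MulAction.orbit (ConjAct G) g := by
    ext c
    simp only [Set.mem_ofPred_eq, Set.mem_image, MulAction.mem_orbit_iff, exists_exists_eq_and,
      ConjAct.toConjAct.surjective.exists, ConjAct.toConjAct_smul]
    constructor <;> rintro ⟨h, rfl⟩ <;> exact ⟨h⁻¹, by group⟩
  rw [centralizer_eq_comap_stabilizer]
  refine (index_comap_of_surjective (H := MulAction.stabilizer (ConjAct G) g)
    (f := ConjAct.toConjAct.toMonoidHom) ConjAct.toConjAct.surjective).trans ?_
  rw [MulAction.index_stabilizer, hset, Nat.card_coe_set_eq,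
    Set.ncard_image_of_injective _ (mul_right_injective g⁻¹)]

theorem commutatorElement_mul_left_of_mem_center {z : G} (hz : z ∈ center G) (a b : G) :
    ⁅a * z, b⁆ = ⁅a, b⁆ := by
  have hzb : z * b * z⁻¹ = b := by rw [← mem_center_iff.mp hz b, mul_inv_cancel_right]
  calc ⁅a * z, b⁆ = a * (z * b * z⁻¹) * a⁻¹ * b⁻¹ := by simp only [commutatorElement_def]; group
    _ = ⁅a, b⁆ := by rw [hzb, commutatorElement_def]

theorem commutatorElement_mul_right_of_mem_center {z : G} (hz : z ∈ center G) (a b : G) :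
    ⁅a, b * z⁆ = ⁅a, b⁆ := by
  rw [← commutatorElement_inv, commutatorElement_mul_left_of_mem_center hz, commutatorElement_inv]

theorem finite_commutatorSet_of_finite_quotient_center [Finite (G ⧸ center G)] :
    Finite (commutatorSet G) := by
  refine Set.Finite.to_subtype ((Set.finite_range
    fun p : (G ⧸ center G) × (G ⧸ center G) => ⁅p.1.out, p.2.out⁆).subset ?_)
  rintro _ ⟨a, b, rfl⟩
  obtain ⟨z, hz⟩ := QuotientGroup.mk_out_eq_mul (center G) a
  obtain ⟨w, hw⟩ := QuotientGroup.mk_out_eq_mul (center G) b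
  refine ⟨((a : G ⧸ center G), (b : G ⧸ center G)), ?_⟩
  simp only [hz, hw, commutatorElement_mul_left_of_mem_center z.2,
    commutatorElement_mul_right_of_mem_center w.2]

end Subgroup

/-- If `G/Z(G)` is generated by the cosets of `x 1, ..., x d` and each set
`[x i, G] = {(x i)⁻¹ * g⁻¹ * (x i) * g : g ∈ G}` is finite, then `G/Z(G)` is finite with
`|G/Z(G)| ≤ ∏ i, |[x i, G]|`, and `G'` is finite. -/
theorem card_central_quotient_le_prod_card_commutator_sets
    (G : Type*) [Group G] (d : ℕ) (x : Fin d → G)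
    (hgen : Subgroup.closure
      (Set.range fun i => ((x i : G) : G ⧸ Subgroup.center G)) = ⊤)
    (hfin : ∀ i : Fin d, {c : G | ∃ g : G, c = (x i)⁻¹ * g⁻¹ * x i * g}.Finite) :
    (Finite (G ⧸ Subgroup.center G) ∧
      Nat.card (G ⧸ Subgroup.center G) ≤
        ∏ i : Fin d, Nat.card {c : G | ∃ g : G, c = (x i)⁻¹ * g⁻¹ * x i * g}) ∧
      Finite (commutator G) := by
  open Subgroup in
  rw [Set.range_comp'] at hgen
  have hcenter : center G = ⨅ i, centralizer {x i} := by
    rw [← centralizer_eq_center_of_closure_image_eq_top hgen, centralizer_eq_iInf, iInf_range]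
  have (i : Fin d) : FiniteIndex (centralizer {x i}) := by
    rw [finiteIndex_iff, index_centralizer_singleton]
    exact (Nat.card_pos_iff.mpr ⟨⟨1, 1, by group⟩, (hfin i).to_subtype⟩).ne'
  have : FiniteIndex (center G) := hcenter ▸ finiteIndex_iInf this
  have : Finite (commutatorSet G) := finite_commutatorSet_of_finite_quotient_center
  refine ⟨⟨inferInstance, ?_⟩, inferInstance⟩
  calc Nat.card (G ⧸ center G) = (⨅ i, centralizer {x i}).index := by rw [← hcenter]; rfl
    _ ≤ ∏ i, (centralizer {x i}).index := index_iInf_le _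
    _ = _ := by simp only [index_centralizer_singleton]
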